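/- arXiv:2302.00860 — 2 statements merged into one kernel-verified Lean document; each statement's English description precedes it below -/
import Mathlib

section
/- Let 𝒰 ⊆ ℝ be an interval and 𝒵 ⊆ ℝ, and let 𝒳 ⊆ ℝ^d. Suppose for each a ∈ 𝒳 we have a bijective, differentiable function q_a : 𝒰 → 𝒵 with nowhere-vanishing derivative. If there exists a function c : 𝒵 → ℝ such that for every a ∈ 𝒳 and every z ∈ 𝒵 one has q_a'(q_a⁻¹(z)) = c(z) (i.e., the derivative of q_a evaluated at the preimage of z does not depend on a), then there exist a function r : 𝒳 → ℝ and an invertible differentiable function q such that q_a(u) = q(u + r(a)) for all a ∈ 𝒳 and u ∈ 𝒰. -/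
/-!
The hypothesis says that every inverse `s a` has the same derivative `1 / c` on `𝒵`. Since `𝒰` is
an interval and `q a` is continuous, `𝒵` is an interval too and `s a` is continuous (a continuous
injection on an interval is strictly monotone), so the inverse-function rule applies within `𝒵`.
Two functions with the same derivative on an interval differ by a constant: `s a₀ = s a + r a`,
and applying `q a₀` gives `q a u = q a₀ (u + r a)`.
-/

open Set Filter Topology

section Order

variable {α β : Type*} [LinearOrder α] [TopologicalSpace α] [OrderTopology α] [DenselyOrdered α]
  [LinearOrder β] [TopologicalSpace β] [OrderTopology β]

theorem MonotoneOn.continuousOn_of_surjOn {g : β → α} {s : Set α} {t : Set β}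
    [s.OrdConnected] [t.OrdConnected] (hg : MonotoneOn g t) (hmaps : MapsTo g t s)
    (hsurj : SurjOn g t s) : ContinuousOn g t := by
  rw [continuousOn_iff_continuous_domRestrict, ← hmaps.coe_restrict]
  refine continuous_subtype_val.comp (Monotone.continuous_of_surjective ?_
    (hmaps.restrict_surjective_iff.2 hsurj))
  exact fun x y hxy => hg x.2 y.2 hxy

theorem AntitoneOn.continuousOn_of_surjOn {g : β → α} {s : Set α} {t : Set β}
    [hs : s.OrdConnected] [t.OrdConnected] (hg : AntitoneOn g t) (hmaps : MapsTo g t s)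
    (hsurj : SurjOn g t s) : ContinuousOn g t :=
  haveI := hs.dual
  MonotoneOn.continuousOn_of_surjOn (α := αᵒᵈ) (s := OrderDual.ofDual ⁻¹' s) hg.dual_right hmaps
    hsurj

end Order

theorem ContinuousOn.strictMonoOn_or_strictAntiOn_of_injOn {α β : Type*}
    [ConditionallyCompleteLinearOrder α] [TopologicalSpace α] [OrderTopology α] [DenselyOrdered α]
    [LinearOrder β] [TopologicalSpace β] [OrderClosedTopology β] {f : α → β} {s : Set α}
    [s.OrdConnected] (hf : ContinuousOn f s) (hinj : InjOn f s) :
    StrictMonoOn f s ∨ StrictAntiOn f s := by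
  rcases s.eq_empty_or_nonempty with rfl | ⟨x, hx⟩
  · exact Or.inl fun x hx => absurd hx (notMem_empty x)
  have : Inhabited s := ⟨⟨x, hx⟩⟩
  rw [strictMonoOn_iff_strictMono, strictAntiOn_iff_strictAnti]
  exact hf.domRestrict.strictMono_of_inj hinj.injective

theorem Set.BijOn.continuousOn_of_invOn {α β : Type*} [ConditionallyCompleteLinearOrder α]
    [TopologicalSpace α] [OrderTopology α] [DenselyOrdered α] [ConditionallyCompleteLinearOrder β]
    [TopologicalSpace β] [OrderTopology β] {f : α → β} {g : β → α} {s : Set α} {t : Set β}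
    [hs : s.OrdConnected] (hf : BijOn f s t) (hfc : ContinuousOn f s) (hinv : InvOn g f s t) :
    ContinuousOn g t := by
  have : t.OrdConnected := hf.image_eq ▸ (hs.isPreconnected.image f hfc).ordConnected
  have hmaps : MapsTo g t s := hinv.1.mapsTo hf.surjOn
  have hsurj : SurjOn g t s := hinv.1.surjOn hf.mapsTo
  rcases hfc.strictMonoOn_or_strictAntiOn_of_injOn hf.injOn with hmono | hanti
  · exact (Function.monotoneOn_of_rightInvOn_of_mapsTo hmono.monotoneOn hinv.2 hmaps)
      |>.continuousOn_of_surjOn hmaps hsurj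
  · exact (Function.antitoneOn_of_rightInvOn_of_mapsTo hanti.antitoneOn hinv.2 hmaps)
      |>.continuousOn_of_surjOn hmaps hsurj

theorem HasDerivWithinAt.of_local_left_inverse {𝕜 : Type*} [NontriviallyNormedField 𝕜]
    {f g : 𝕜 → 𝕜} {f' a : 𝕜} {s t : Set 𝕜}
    (hg : Tendsto g (𝓝[s] a) (𝓝[t] (g a))) (hf : HasDerivWithinAt f f' t (g a)) (hf' : f' ≠ 0)
    (ha : a ∈ s) (hfg : ∀ᶠ x in 𝓝[s] a, f (g x) = x) : HasDerivWithinAt g f'⁻¹ s a :=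
  HasFDerivWithinAt.of_local_left_inverse
    (f' := ContinuousLinearEquiv.unitsEquivAut 𝕜 (Units.mk0 f' hf')) hg hf ha hfg

theorem Set.BijOn.hasDerivWithinAt_of_invOn {f g f' : ℝ → ℝ} {s t : Set ℝ} [s.OrdConnected]
    (hf : BijOn f s t) (hinv : InvOn g f s t) (hderiv : ∀ x ∈ s, HasDerivWithinAt f (f' x) s x)
    (hderiv_ne : ∀ x ∈ s, f' x ≠ 0) {y : ℝ} (hy : y ∈ t) : HasDerivWithinAt g (f' (g y))⁻¹ t y := by
  have hmaps : MapsTo g t s := hinv.1.mapsTo hf.surjOn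
  have hgc : ContinuousOn g t :=
    hf.continuousOn_of_invOn (fun x hx => (hderiv x hx).continuousWithinAt) hinv
  exact (hderiv _ (hmaps hy)).of_local_left_inverse ((hgc y hy).tendsto_nhdsWithin hmaps)
    (hderiv_ne _ (hmaps hy)) hy (eventually_nhdsWithin_of_forall fun _ hz => hinv.2 hz)

theorem Convex.exists_eq_add_const_of_hasDerivWithinAt {E : Type*} [NormedAddCommGroup E]
    [NormedSpace ℝ E] {f g f' : ℝ → E} {s : Set ℝ} (hs : Convex ℝ s)
    (hf : ∀ x ∈ s, HasDerivWithinAt f (f' x) s x) (hg : ∀ x ∈ s, HasDerivWithinAt g (f' x) s x) :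
    ∃ k, ∀ x ∈ s, f x = g x + k := by
  rcases s.eq_empty_or_nonempty with rfl | ⟨x₀, hx₀⟩
  · exact ⟨0, by simp⟩
  refine ⟨f x₀ - g x₀, fun x hx => ?_⟩
  have h := hs.norm_image_sub_le_of_norm_hasDerivWithin_le (f := f - g) (C := 0)
    (fun y hy => by simpa using (hf y hy).sub (hg y hy)) (fun _ _ => by simp) hx₀ hx
  rw [zero_mul, norm_le_zero_iff, sub_eq_zero, Pi.sub_apply, Pi.sub_apply] at h
  rw [← h, add_sub_cancel]

/-- **Lemma 1 of the paper, forward direction.**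
Let `𝒰 ⊆ ℝ` be an interval (`OrdConnected`), `𝒵 ⊆ ℝ`, `𝒳 ⊆ ℝ^d`.  For each `a ∈ 𝒳`
we have a bijective differentiable function `q a : 𝒰 → 𝒵` with nowhere-vanishing
derivative `q' a`, and inverse `s a`.  If the derivative of `q a` evaluated at the
preimage of `z` does not depend on `a`, i.e. `q' a (s a z) = c z` for a function `c`,
then all members of the family are horizontal translates of a single invertible
differentiable function `Q`: `q a u = Q (u + r a)`. -/
theorem lemma1_forward {d : ℕ}
    (𝒰 𝒵 : Set ℝ) (hUinterval : 𝒰.OrdConnected)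
    (𝒳 : Set (Fin d → ℝ)) (hXne : 𝒳.Nonempty)
    (q : (Fin d → ℝ) → ℝ → ℝ) (q' : (Fin d → ℝ) → ℝ → ℝ)
    (s : (Fin d → ℝ) → ℝ → ℝ)
    (hbij : ∀ a ∈ 𝒳, Set.BijOn (q a) 𝒰 𝒵)
    (hinv : ∀ a ∈ 𝒳, Set.InvOn (s a) (q a) 𝒰 𝒵)
    (hderiv : ∀ a ∈ 𝒳, ∀ u ∈ 𝒰, HasDerivWithinAt (q a) (q' a u) 𝒰 u)
    (hderiv_ne : ∀ a ∈ 𝒳, ∀ u ∈ 𝒰, q' a u ≠ 0)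
    (c : ℝ → ℝ)
    (hc : ∀ a ∈ 𝒳, ∀ z ∈ 𝒵, q' a (s a z) = c z) :
    ∃ (r : (Fin d → ℝ) → ℝ) (Q : ℝ → ℝ),
      Set.BijOn Q 𝒰 𝒵 ∧ DifferentiableOn ℝ Q 𝒰 ∧
      ∀ a ∈ 𝒳, ∀ u ∈ 𝒰, q a u = Q (u + r a) := by
  obtain ⟨a₀, ha₀⟩ := hXne
  have := hUinterval
  have hZ : Convex ℝ 𝒵 := by
    have hqc : ContinuousOn (q a₀) 𝒰 := fun u hu => (hderiv a₀ ha₀ u hu).continuousWithinAt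
    rw [← (hbij a₀ ha₀).image_eq]
    exact (hUinterval.isPreconnected.image _ hqc).ordConnected.convex
  have hderiv_inv : ∀ a ∈ 𝒳, ∀ z ∈ 𝒵, HasDerivWithinAt (s a) (c z)⁻¹ 𝒵 z := fun a ha z hz =>
    hc a ha z hz ▸ (hbij a ha).hasDerivWithinAt_of_invOn (hinv a ha) (hderiv a ha)
      (hderiv_ne a ha) hz
  choose! r hr using fun a (ha : a ∈ 𝒳) =>
    hZ.exists_eq_add_const_of_hasDerivWithinAt (hderiv_inv a₀ ha₀) (hderiv_inv a ha)
  refine ⟨r, q a₀, hbij a₀ ha₀, fun u hu => (hderiv a₀ ha₀ u hu).differentiableWithinAt,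
    fun a ha u hu => ?_⟩
  have hz : q a u ∈ 𝒵 := (hbij a ha).mapsTo hu
  calc q a u = q a₀ (s a₀ (q a u)) := ((hinv a₀ ha₀).2 hz).symm
    _ = q a₀ (u + r a) := by rw [hr a ha _ hz, (hinv a ha).1 hu]
end

section
/- Let m ≥ 3, 𝒰, 𝒵 ⊆ ℝ^m with 𝒰 open and connected, and 𝒳 ⊆ ℝ^d. Suppose for each a ∈ 𝒳 we have an invertible, differentiable function q_a : 𝒰 → 𝒵, and suppose there exist a nonzero constant c ∈ ℝ and a fixed orthogonal matrix A ∈ ℝ^{m×m} such that the Jacobian satisfies Jq_a(q_a⁻¹(z)) = cA for every a ∈ 𝒳 and every z ∈ 𝒵. Then there exist a function r : 𝒳 → ℝ^m and an invertible function q such that q_a(u) = q(u + r(a)) for all a ∈ 𝒳 and u ∈ 𝒰. -/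
open Set

/-! Pulling the Jacobian back through the inverses `s a`, every `q a` has the constant derivative
`c • A` on the connected open set `𝒰`, hence is affine there with linear part `c • A`. Affine maps
with a common linear part differ by a translation of the argument, and the translation for `q a`
is found by matching its value at one point with a value of `q a₀`, which is possible because
both map `𝒰` onto `𝒵`. -/

theorem IsOpen.eqOn_affine_of_fderiv_eq_const {E F : Type*} [NormedAddCommGroup E]
    [NormedSpace ℝ E] [NormedAddCommGroup F] [NormedSpace ℝ F] {f : E → F} {U : Set E}
    {L : E →L[ℝ] F} (hU : IsOpen U) (hU' : IsPreconnected U) (hf : DifferentiableOn ℝ f U)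
    (hf' : ∀ x ∈ U, fderiv ℝ f x = L) {x₀ : E} (hx₀ : x₀ ∈ U) :
    EqOn f (fun x => f x₀ + L (x - x₀)) U := by
  have hdiff : Differentiable ℝ fun x => f x₀ + L (x - x₀) := by fun_prop
  refine hU.eqOn_of_fderiv_eq hU' hf hdiff.differentiableOn (fun x hx => ?_) hx₀ (by simp)
  simp only [hf' x hx, map_sub, fderiv_const_add, fderiv_sub_const, L.fderiv]

theorem lemma2_multivariate_translation_general {m d : ℕ}
    (𝒰 𝒵 : Set (Fin m → ℝ)) (hUopen : IsOpen 𝒰) (hUconn : IsConnected 𝒰)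
    (𝒳 : Set (Fin d → ℝ)) (hXne : 𝒳.Nonempty)
    (q : (Fin d → ℝ) → (Fin m → ℝ) → (Fin m → ℝ))
    (s : (Fin d → ℝ) → (Fin m → ℝ) → (Fin m → ℝ))
    (hbij : ∀ a ∈ 𝒳, Set.BijOn (q a) 𝒰 𝒵)
    (hinv : ∀ a ∈ 𝒳, Set.InvOn (s a) (q a) 𝒰 𝒵)
    (hdiff : ∀ a ∈ 𝒳, DifferentiableOn ℝ (q a) 𝒰)
    (c : ℝ)
    (A : (Fin m → ℝ) →L[ℝ] (Fin m → ℝ))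
    (hJac : ∀ a ∈ 𝒳, ∀ z ∈ 𝒵, fderiv ℝ (q a) (s a z) = c • A) :
    ∃ (r : (Fin d → ℝ) → (Fin m → ℝ)) (Q : (Fin m → ℝ) → (Fin m → ℝ)),
      Set.BijOn Q 𝒰 𝒵 ∧
      ∀ a ∈ 𝒳, ∀ u ∈ 𝒰, q a u = Q (u + r a) := by
  obtain ⟨a₀, ha₀⟩ := hXne
  obtain ⟨u₀, hu₀⟩ := hUconn.nonempty
  have hderiv (a) (ha : a ∈ 𝒳) (u) (hu : u ∈ 𝒰) : fderiv ℝ (q a) u = c • A := by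
    simpa only [(hinv a ha).1 hu] using hJac a ha _ ((hbij a ha).mapsTo hu)
  have haffine (a) (ha : a ∈ 𝒳) : EqOn (q a) (fun u => q a u₀ + (c • A) (u - u₀)) 𝒰 :=
    hUopen.eqOn_affine_of_fderiv_eq_const hUconn.isPreconnected (hdiff a ha) (hderiv a ha) hu₀
  choose! u' hu' hqu' using fun a ha => (hbij a₀ ha₀).surjOn ((hbij a ha).mapsTo hu₀)
  refine ⟨fun a => u' a - u₀, fun u => q a₀ u₀ + (c • A) (u - u₀),
    (hbij a₀ ha₀).congr (haffine a₀ ha₀), fun a ha u hu => ?_⟩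
  calc q a u = q a₀ (u' a) + (c • A) (u - u₀) := by rw [haffine a ha hu, hqu' a ha]
    _ = q a₀ u₀ + (c • A) (u + (u' a - u₀) - u₀) := by
      rw [haffine a₀ ha₀ (hu' a ha), add_assoc, ← map_add]
      congr 2
      abel

/-- **Lemma 2 of the paper** (multivariate translation lemma).
Let `m ≥ 3`, `𝒰, 𝒵 ⊆ ℝ^m` with `𝒰` open and connected, `𝒳 ⊆ ℝ^d`.  For each `a ∈ 𝒳`
we have an invertible differentiable function `q a : 𝒰 → 𝒵` (with inverse `s a`), and
the Jacobian satisfies `Jq_a (q_a⁻¹ z) = c • A` for a fixed nonzero constant `c` and a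
fixed orthogonal linear map `A` (i.e. `A` preserves the dot product).  Then all members
of the family are translates of a single invertible function `Q`:
`q a u = Q (u + r a)`. -/
theorem lemma2_multivariate_translation {m d : ℕ} (hm : 3 ≤ m)
    (𝒰 𝒵 : Set (Fin m → ℝ)) (hUopen : IsOpen 𝒰) (hUconn : IsConnected 𝒰)
    (𝒳 : Set (Fin d → ℝ)) (hXne : 𝒳.Nonempty)
    (q : (Fin d → ℝ) → (Fin m → ℝ) → (Fin m → ℝ))
    (s : (Fin d → ℝ) → (Fin m → ℝ) → (Fin m → ℝ))
    (hbij : ∀ a ∈ 𝒳, Set.BijOn (q a) 𝒰 𝒵)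
    (hinv : ∀ a ∈ 𝒳, Set.InvOn (s a) (q a) 𝒰 𝒵)
    (hdiff : ∀ a ∈ 𝒳, DifferentiableOn ℝ (q a) 𝒰)
    (c : ℝ) (hc : c ≠ 0)
    (A : (Fin m → ℝ) →L[ℝ] (Fin m → ℝ))
    (hA_orth : ∀ v w : Fin m → ℝ, (A v) ⬝ᵥ (A w) = v ⬝ᵥ w)
    (hJac : ∀ a ∈ 𝒳, ∀ z ∈ 𝒵, fderiv ℝ (q a) (s a z) = c • A) :
    ∃ (r : (Fin d → ℝ) → (Fin m → ℝ)) (Q : (Fin m → ℝ) → (Fin m → ℝ)),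
      Set.BijOn Q 𝒰 𝒵 ∧
      ∀ a ∈ 𝒳, ∀ u ∈ 𝒰, q a u = Q (u + r a) :=
  lemma2_multivariate_translation_general 𝒰 𝒵 hUopen hUconn 𝒳 hXne q s hbij hinv hdiff c A hJac
end
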